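/- arXiv:2208.04341 — 2 statements merged into one kernel-verified Lean document; each statement's English description precedes it below -/
import Mathlib

section
/- Let ρ₀ = (1/6)·[[2,0,0,0],[0,1,1,0],[0,1,1,0],[0,0,0,2]] and ρ₁ = (1/2)·[[0,0,0,0],[0,1,-1,0],[0,-1,1,0],[0,0,0,0]] be 4×4 complex matrices indexed by Fin 2 × Fin 2. For a matrix M indexed by ((Fin 2 × Fin 2) × (Fin 2 × Fin 2)) × ((Fin 2 × Fin 2) × (Fin 2 × Fin 2)), define the partial transpose on both B-qubits by M^{T_BB}(((a₁,b₁),(a₂,b₂)),((c₁,d₁),(c₂,d₂))) = M(((a₁,d₁),(a₂,d₂)),((c₁,b₁),(c₂,b₂))). Then for every matrix Π₀ indexed by (Fin 2 × Fin 2) × (Fin 2 × Fin 2) such that Π₀, 1 − Π₀, Π₀^{T_BB}, and (1 − Π₀)^{T_BB} are all positive semidefinite, the real part of (1/2)·(Tr(Π₀·(ρ₀ ⊗ₖ ρ₀)) + Tr((1 − Π₀)·(ρ₁ ⊗ₖ ρ₁))) is at most 17/18. -/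
/-!
Let `F` be the swap of two qubits, so that `ρ₀ = (1 + F)/6` and `ρ₁ = (1 - F)/2`, and let `Φ` be
the projector onto the unnormalized vector `∑ᵢ |ii⟩`, whose partial transpose is `F`. The witness
`W = Φ ⊗ 1 + 1 ⊗ Φ` is positive semidefinite with trace `16`, and
`W^{T_BB} = F ⊗ 1 + 1 ⊗ F = 18 ρ₀⊗ρ₀ - 2 ρ₁⊗ρ₁`. Since `1 - Π₀^{T_BB} ≥ 0`,
`18 Tr(Π₀ ρ₀⊗ρ₀) - 2 Tr(Π₀ ρ₁⊗ρ₁) = Tr(Π₀^{T_BB} W) ≤ Tr W = 16`, and together with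
`Tr(Π₀ ρ₁⊗ρ₁) ≥ 0` the success probability `½ (Tr(Π₀ ρ₀⊗ρ₀) + 1 - Tr(Π₀ ρ₁⊗ρ₁))` is at most
`½ (16/18 + 1) = 17/18`.
-/

open Matrix
open scoped Kronecker ComplexOrder

noncomputable section

/-- Encode a pair of qubits (row/column order 00, 01, 10, 11) as an index in `Fin 4`. -/
def idx4 : Fin 2 × Fin 2 → Fin 4 :=
  fun p => ⟨2 * p.1.val + p.2.val, by have := p.1.isLt; have := p.2.isLt; omega⟩

/-- Uniform mixture of the three symmetric Bell states. -/
def ρ₀ : Matrix (Fin 2 × Fin 2) (Fin 2 × Fin 2) ℂ :=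
  (1/6 : ℂ) • Matrix.of fun p q =>
    (!![2,0,0,0; 0,1,1,0; 0,1,1,0; 0,0,0,2] : Matrix (Fin 4) (Fin 4) ℂ) (idx4 p) (idx4 q)

/-- The antisymmetric Bell state. -/
def ρ₁ : Matrix (Fin 2 × Fin 2) (Fin 2 × Fin 2) ℂ :=
  (1/2 : ℂ) • Matrix.of fun p q =>
    (!![0,0,0,0; 0,1,-1,0; 0,-1,1,0; 0,0,0,0] : Matrix (Fin 4) (Fin 4) ℂ) (idx4 p) (idx4 q)

/-- Partial transpose on both of B's qubits:
`M^{T_BB}(((a₁,b₁),(a₂,b₂)),((c₁,d₁),(c₂,d₂))) = M(((a₁,d₁),(a₂,d₂)),((c₁,b₁),(c₂,b₂)))`. -/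
def ptBB
    (M : Matrix ((Fin 2 × Fin 2) × (Fin 2 × Fin 2)) ((Fin 2 × Fin 2) × (Fin 2 × Fin 2)) ℂ) :
    Matrix ((Fin 2 × Fin 2) × (Fin 2 × Fin 2)) ((Fin 2 × Fin 2) × (Fin 2 × Fin 2)) ℂ :=
  Matrix.of fun p q =>
    M ((p.1.1, q.1.2), (p.2.1, q.2.2)) ((q.1.1, p.1.2), (q.2.1, p.2.2))

namespace Matrix

section PosSemidef

variable {𝕜 n : Type*} [RCLike 𝕜] [Fintype n] [DecidableEq n] {A B : Matrix n n 𝕜}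

open scoped MatrixOrder in
theorem PosSemidef.trace_mul_nonneg (hA : A.PosSemidef) (hB : B.PosSemidef) :
    0 ≤ (A * B).trace := by
  obtain ⟨C, rfl⟩ := CStarAlgebra.nonneg_iff_eq_star_mul_self.mp hA.nonneg
  rw [star_eq_conjTranspose, Matrix.mul_assoc, trace_mul_comm]
  exact (hB.mul_mul_conjTranspose_same C).trace_nonneg

theorem trace_mul_le_trace_of_posSemidef_one_sub (hA : (1 - A).PosSemidef) (hB : B.PosSemidef) :
    (A * B).trace ≤ B.trace := by
  simpa [Matrix.sub_mul, trace_sub] using hA.trace_mul_nonneg hB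

theorem posSemidef_one_sub_of_mul_self_eq_one {S : Matrix n n 𝕜} (hS : S.IsHermitian)
    (hSS : S * S = 1) : (1 - S).PosSemidef := by
  have h : (1 - S)ᴴ * (1 - S) = (2 : 𝕜) • (1 - S) := by
    rw [conjTranspose_sub, conjTranspose_one, hS.eq, Matrix.sub_mul, Matrix.mul_sub,
      Matrix.mul_sub, hSS, Matrix.one_mul, Matrix.mul_one, Matrix.one_mul]
    module
  have h2 : 1 - S = (2⁻¹ : 𝕜) • ((1 - S)ᴴ * (1 - S)) := by
    rw [h, smul_smul, inv_mul_cancel₀ two_ne_zero, one_smul]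
  rw [h2]
  exact (posSemidef_conjTranspose_mul_self _).smul (by simp)

end PosSemidef

section PartialTranspose

variable {α β R : Type*}

def partialTranspose (M : Matrix (α × β) (α × β) R) : Matrix (α × β) (α × β) R :=
  of fun p q => M (p.1, q.2) (q.1, p.2)

@[simp]
theorem partialTranspose_one [DecidableEq α] [DecidableEq β] [Zero R] [One R] :
    partialTranspose (1 : Matrix (α × β) (α × β) R) = 1 := by
  ext ⟨a, b⟩ ⟨c, d⟩
  simp only [partialTranspose, of_apply, one_apply, Prod.mk.injEq]
  exact if_congr (and_congr_right' eq_comm) rfl rfl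

variable (α : Type*) [DecidableEq α] (𝕜 : Type*) [RCLike 𝕜]

def maxEntangledVec : α × α → 𝕜 := fun p => if p.1 = p.2 then 1 else 0

def maxEntangled : Matrix (α × α) (α × α) 𝕜 :=
  vecMulVec (maxEntangledVec α 𝕜) (star (maxEntangledVec α 𝕜))

theorem posSemidef_maxEntangled [Fintype α] : (maxEntangled α 𝕜).PosSemidef :=
  posSemidef_vecMulVec_self_star _

theorem trace_maxEntangled [Fintype α] : (maxEntangled α 𝕜).trace = Fintype.card α := by
  simp [maxEntangled, maxEntangledVec, trace, vecMulVec_apply, Fintype.sum_prod_type]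

def tensorSwap : Matrix (α × α) (α × α) 𝕜 := Equiv.Perm.permMatrix 𝕜 (Equiv.prodComm α α)

theorem partialTranspose_maxEntangled :
    partialTranspose (maxEntangled α 𝕜) = tensorSwap α 𝕜 := by
  ext ⟨a, b⟩ ⟨c, d⟩
  simp [partialTranspose, maxEntangled, maxEntangledVec, tensorSwap, vecMulVec_apply,
    PEquiv.toMatrix_apply, ite_and, eq_comm]

theorem tensorSwap_mul_self [Fintype α] : tensorSwap α 𝕜 * tensorSwap α 𝕜 = 1 := by
  rw [tensorSwap, ← permMatrix_mul, ← permMatrix_one]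
  rfl

theorem isHermitian_tensorSwap : (tensorSwap α 𝕜).IsHermitian := by
  rw [IsHermitian, tensorSwap, conjTranspose_permMatrix]
  rfl

end PartialTranspose

end Matrix

theorem ρ₀_eq : ρ₀ = (1/6 : ℂ) • (1 + tensorSwap (Fin 2) ℂ) := by
  ext ⟨a, b⟩ ⟨c, d⟩
  fin_cases a <;> fin_cases b <;> fin_cases c <;> fin_cases d <;>
    simp [ρ₀, idx4, tensorSwap, PEquiv.toMatrix_apply, one_apply, one_add_one_eq_two]

theorem ρ₁_eq : ρ₁ = (1/2 : ℂ) • (1 - tensorSwap (Fin 2) ℂ) := by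
  ext ⟨a, b⟩ ⟨c, d⟩
  fin_cases a <;> fin_cases b <;> fin_cases c <;> fin_cases d <;>
    simp [ρ₁, idx4, tensorSwap, PEquiv.toMatrix_apply, one_apply]

theorem posSemidef_ρ₁ : ρ₁.PosSemidef := by
  rw [ρ₁_eq]
  exact (posSemidef_one_sub_of_mul_self_eq_one (isHermitian_tensorSwap _ _)
    (tensorSwap_mul_self _ _)).smul (by simp)

theorem trace_ρ₁ : ρ₁.trace = 1 := by
  norm_num [ρ₁, idx4, trace, Fintype.sum_prod_type]

theorem ptBB_add (M N : Matrix ((Fin 2 × Fin 2) × (Fin 2 × Fin 2))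
    ((Fin 2 × Fin 2) × (Fin 2 × Fin 2)) ℂ) : ptBB (M + N) = ptBB M + ptBB N := rfl

theorem ptBB_sub (M N : Matrix ((Fin 2 × Fin 2) × (Fin 2 × Fin 2))
    ((Fin 2 × Fin 2) × (Fin 2 × Fin 2)) ℂ) : ptBB (M - N) = ptBB M - ptBB N := rfl

theorem ptBB_kronecker (A B : Matrix (Fin 2 × Fin 2) (Fin 2 × Fin 2) ℂ) :
    ptBB (A ⊗ₖ B) = partialTranspose A ⊗ₖ partialTranspose B := rfl

theorem ptBB_one : ptBB 1 = 1 := by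
  rw [← one_kronecker_one, ptBB_kronecker, partialTranspose_one]

theorem trace_mul_ptBB (M N : Matrix ((Fin 2 × Fin 2) × (Fin 2 × Fin 2))
    ((Fin 2 × Fin 2) × (Fin 2 × Fin 2)) ℂ) :
    (M * ptBB N).trace = (ptBB M * N).trace := by
  simp only [trace, diag, mul_apply, ← Fintype.sum_prod_type']
  -- the involution exchanging B's halves of the row and column indices
  let f (x : ((Fin 2 × Fin 2) × (Fin 2 × Fin 2)) × ((Fin 2 × Fin 2) × (Fin 2 × Fin 2))) :=
    (((x.1.1.1, x.2.1.2), (x.1.2.1, x.2.2.2)), ((x.2.1.1, x.1.1.2), (x.2.2.1, x.1.2.2)))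
  exact Fintype.sum_equiv (Function.Involutive.toPerm f fun _ => rfl) _ _ fun _ => rfl

def twoCopyWitness :
    Matrix ((Fin 2 × Fin 2) × (Fin 2 × Fin 2)) ((Fin 2 × Fin 2) × (Fin 2 × Fin 2)) ℂ :=
  maxEntangled (Fin 2) ℂ ⊗ₖ 1 + 1 ⊗ₖ maxEntangled (Fin 2) ℂ

theorem posSemidef_twoCopyWitness : twoCopyWitness.PosSemidef :=
  ((posSemidef_maxEntangled _ _).kronecker PosSemidef.one).add
    (PosSemidef.one.kronecker (posSemidef_maxEntangled _ _))

theorem trace_twoCopyWitness : twoCopyWitness.trace = 16 := by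
  rw [twoCopyWitness, trace_add, trace_kronecker, trace_kronecker, trace_maxEntangled, trace_one]
  norm_num

theorem ptBB_twoCopyWitness :
    ptBB twoCopyWitness = (18 : ℂ) • (ρ₀ ⊗ₖ ρ₀) - (2 : ℂ) • (ρ₁ ⊗ₖ ρ₁) := by
  rw [twoCopyWitness, ptBB_add, ptBB_kronecker, ptBB_kronecker, partialTranspose_maxEntangled,
    partialTranspose_one, ρ₀_eq, ρ₁_eq]
  ext p q
  simp only [Matrix.add_apply, Matrix.sub_apply, Matrix.smul_apply, kroneckerMap_apply,
    smul_eq_mul]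
  ring

/-- PPT attackers succeed with probability at most `17/18` in the two-round
symmetric/antisymmetric Bell-state discrimination protocol. -/
theorem ppt_bound_two_rounds :
    ∀ P₀ : Matrix ((Fin 2 × Fin 2) × (Fin 2 × Fin 2)) ((Fin 2 × Fin 2) × (Fin 2 × Fin 2)) ℂ,
      P₀.PosSemidef → (1 - P₀).PosSemidef →
      (ptBB P₀).PosSemidef → (ptBB (1 - P₀)).PosSemidef →
      ((1/2 : ℂ) * ((P₀ * (ρ₀ ⊗ₖ ρ₀)).trace + ((1 - P₀) * (ρ₁ ⊗ₖ ρ₁)).trace)).re ≤ 17/18 := by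
  intro P₀ hP₀ _ _ hP₁
  set t₀ := (P₀ * (ρ₀ ⊗ₖ ρ₀)).trace
  set t₁ := (P₀ * (ρ₁ ⊗ₖ ρ₁)).trace
  have hcert : 18 * t₀ - 2 * t₁ = (ptBB P₀ * twoCopyWitness).trace := by
    rw [← trace_mul_ptBB, ptBB_twoCopyWitness, Matrix.mul_sub, trace_sub, Matrix.mul_smul,
      Matrix.mul_smul, trace_smul, trace_smul, smul_eq_mul, smul_eq_mul]
  have hW : (ptBB P₀ * twoCopyWitness).trace ≤ 16 := by
    rw [← trace_twoCopyWitness]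
    refine trace_mul_le_trace_of_posSemidef_one_sub ?_ posSemidef_twoCopyWitness
    rwa [ptBB_sub, ptBB_one] at hP₁
  have ht₁ : 0 ≤ t₁ := hP₀.trace_mul_nonneg (posSemidef_ρ₁.kronecker posSemidef_ρ₁)
  have hσ₁ : ((1 - P₀) * (ρ₁ ⊗ₖ ρ₁)).trace = 1 - t₁ := by
    rw [Matrix.sub_mul, trace_sub, Matrix.one_mul, trace_kronecker, trace_ρ₁, one_mul]
  obtain ⟨hbound, -⟩ := Complex.le_def.mp (hcert.trans_le hW)
  obtain ⟨ht₁_re, -⟩ := Complex.le_def.mp ht₁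
  simp only [Complex.sub_re, Complex.mul_re, Complex.re_ofNat, Complex.im_ofNat, zero_mul,
    sub_zero, Complex.zero_re] at hbound ht₁_re
  have hre : ((1/2 : ℂ) * (t₀ + (1 - t₁))).re = (t₀.re + 1 - t₁.re) / 2 := by
    simp [Complex.mul_re]
    ring
  rw [hσ₁, hre]
  linarith
end
end

section
/- Let α and β be nonempty finite types and let ρ be a positive semidefinite complex matrix indexed by α × β with Tr(ρ) = 1. Let ρ_A(m,n) = ∑_{b} ρ((m,b),(n,b)) and ρ_B(b,b') = ∑_{m} ρ((m,b),(m,b')) be its partial traces. Then the real part of Tr(ρ · (ρ_A ⊗ₖ ρ_B)) is strictly positive. -/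
/-!
Diagonalize both marginals by unitaries `U` and `V`. Conjugating `ρ` by `U ⊗ V` conjugates its
marginals by `U` and `V` and leaves `Tr(ρ (ρ_A ⊗ ρ_B))` unchanged, so we may assume that `ρ_A` and
`ρ_B` are diagonal. The overlap is then `∑ ρ_{ab,ab} (ρ_A)_{aa} (ρ_B)_{bb}`, a sum of nonnegative
terms in which `ρ_{ab,ab}` is bounded by both `(ρ_A)_{aa}` and `(ρ_B)_{bb}`; a nonzero diagonal
entry of `ρ`, which exists as `ρ ≠ 0`, therefore yields a positive term.
-/

open Matrix
open scoped Kronecker ComplexOrder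

namespace Matrix

variable {R 𝕜 α β α' β' : Type*} [RCLike 𝕜]

/-- `ρ_A`, obtained by tracing out the right factor; `partialTraceLeft ρ` is `ρ_B`. -/
def partialTraceRight [AddCommMonoid R] [Fintype β]
    (ρ : Matrix (α × β) (α × β) R) : Matrix α α R :=
  of fun m n => ∑ b, ρ (m, b) (n, b)

def partialTraceLeft [AddCommMonoid R] [Fintype α]
    (ρ : Matrix (α × β) (α × β) R) : Matrix β β R :=
  of fun b b' => ∑ m, ρ (m, b) (m, b')

theorem IsHermitian.partialTraceRight [AddCommMonoid R] [StarAddMonoid R] [Fintype β]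
    {ρ : Matrix (α × β) (α × β) R} (hρ : ρ.IsHermitian) :
    (partialTraceRight ρ).IsHermitian := by
  ext m n
  simp only [conjTranspose_apply, Matrix.partialTraceRight, of_apply, star_sum, hρ.apply]

theorem IsHermitian.partialTraceLeft [AddCommMonoid R] [StarAddMonoid R] [Fintype α]
    {ρ : Matrix (α × β) (α × β) R} (hρ : ρ.IsHermitian) :
    (partialTraceLeft ρ).IsHermitian := by
  ext b b'
  simp only [conjTranspose_apply, Matrix.partialTraceLeft, of_apply, star_sum, hρ.apply]

theorem partialTraceRight_conjTranspose_mul_mul_kronecker [CommSemiring R] [StarRing R]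
    [Fintype α] [Fintype β] [Fintype β'] [DecidableEq β]
    (ρ : Matrix (α × β) (α × β) R) (U : Matrix α α' R) (V : Matrix β β' R) (hV : V * Vᴴ = 1) :
    partialTraceRight ((U ⊗ₖ V)ᴴ * ρ * (U ⊗ₖ V)) = Uᴴ * partialTraceRight ρ * U := by
  have hV' : ∀ c c', ∑ b, star (V c b) * V c' b = if c' = c then 1 else 0 := fun c c' => by
    simpa [mul_apply, one_apply, mul_comm] using congrFun (congrFun hV c') c
  ext m n
  simp only [partialTraceRight, of_apply, mul_apply, conjTranspose_apply, kroneckerMap_apply,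
    Fintype.sum_prod_type, star_mul', Finset.sum_mul, Finset.mul_sum]
  calc _ = ∑ a', ∑ c', ∑ a, ∑ c, star (U a m) * ρ (a, c) (a', c') * U a' n *
        ∑ b, star (V c b) * V c' b := by
        simp only [Finset.mul_sum]
        rw [Finset.sum_comm]; refine Finset.sum_congr rfl fun _ _ => ?_
        rw [Finset.sum_comm]; refine Finset.sum_congr rfl fun _ _ => ?_
        rw [Finset.sum_comm]; refine Finset.sum_congr rfl fun _ _ => ?_
        rw [Finset.sum_comm]; refine Finset.sum_congr rfl fun _ _ => ?_
        refine Finset.sum_congr rfl fun _ _ => ?_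
        ring
    _ = _ := by
        simp only [hV', mul_ite, mul_one, mul_zero, Finset.sum_ite_eq, Finset.mem_univ, if_true]
        exact Finset.sum_congr rfl fun _ _ => Finset.sum_comm

theorem partialTraceLeft_conjTranspose_mul_mul_kronecker [CommSemiring R] [StarRing R]
    [Fintype α] [Fintype β] [Fintype α'] [DecidableEq α]
    (ρ : Matrix (α × β) (α × β) R) (U : Matrix α α' R) (V : Matrix β β' R) (hU : U * Uᴴ = 1) :
    partialTraceLeft ((U ⊗ₖ V)ᴴ * ρ * (U ⊗ₖ V)) = Vᴴ * partialTraceLeft ρ * V := by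
  have hU' : ∀ a a', ∑ m, star (U a m) * U a' m = if a' = a then 1 else 0 := fun a a' => by
    simpa [mul_apply, one_apply, mul_comm] using congrFun (congrFun hU a') a
  ext b b'
  simp only [partialTraceLeft, of_apply, mul_apply, conjTranspose_apply, kroneckerMap_apply,
    Fintype.sum_prod_type, star_mul', Finset.sum_mul, Finset.mul_sum]
  calc _ = ∑ a', ∑ c', ∑ a, ∑ c, star (V c b) * ρ (a, c) (a', c') * V c' b' *
        ∑ m, star (U a m) * U a' m := by
        simp only [Finset.mul_sum]
        rw [Finset.sum_comm]; refine Finset.sum_congr rfl fun _ _ => ?_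
        rw [Finset.sum_comm]; refine Finset.sum_congr rfl fun _ _ => ?_
        rw [Finset.sum_comm]; refine Finset.sum_congr rfl fun _ _ => ?_
        rw [Finset.sum_comm]; refine Finset.sum_congr rfl fun _ _ => ?_
        refine Finset.sum_congr rfl fun _ _ => ?_
        ring
    _ = _ := by
        simp only [hU', mul_ite, mul_one, mul_zero]
        rw [Finset.sum_comm]
        refine Finset.sum_congr rfl fun _ _ => ?_
        simp only [Finset.sum_ite_irrel, Finset.sum_const_zero, Finset.sum_ite_eq, Finset.mem_univ,
          if_true]
        exact Finset.sum_comm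

theorem kronecker_mul_conjTranspose_eq_one [CommSemiring R] [StarRing R]
    [Fintype α'] [Fintype β'] [DecidableEq α] [DecidableEq β] {U : Matrix α α' R}
    {V : Matrix β β' R} (hU : U * Uᴴ = 1) (hV : V * Vᴴ = 1) : (U ⊗ₖ V) * (U ⊗ₖ V)ᴴ = 1 := by
  rw [conjTranspose_kronecker, ← mul_kronecker_mul, hU, hV, one_kronecker_one]

theorem trace_mul_kronecker_partialTrace_conjTranspose_mul_mul_kronecker [CommRing R]
    [StarRing R] [Fintype α] [Fintype β] [Fintype α'] [Fintype β'] [DecidableEq α]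
    [DecidableEq β] (ρ : Matrix (α × β) (α × β) R) {U : Matrix α α' R} {V : Matrix β β' R}
    (hU : U * Uᴴ = 1) (hV : V * Vᴴ = 1) :
    let ρ' := (U ⊗ₖ V)ᴴ * ρ * (U ⊗ₖ V)
    trace (ρ' * (partialTraceRight ρ' ⊗ₖ partialTraceLeft ρ')) =
      trace (ρ * (partialTraceRight ρ ⊗ₖ partialTraceLeft ρ)) := by
  have hW := kronecker_mul_conjTranspose_eq_one hU hV
  intro ρ'
  rw [partialTraceRight_conjTranspose_mul_mul_kronecker ρ U V hV,
    partialTraceLeft_conjTranspose_mul_mul_kronecker ρ U V hU, mul_kronecker_mul,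
    mul_kronecker_mul, ← conjTranspose_kronecker]
  set W := U ⊗ₖ V
  set σ := partialTraceRight ρ ⊗ₖ partialTraceLeft ρ
  calc trace (Wᴴ * ρ * W * (Wᴴ * σ * W)) = trace (Wᴴ * (ρ * (W * Wᴴ) * σ * W)) := by
        simp only [Matrix.mul_assoc]
    _ = trace (ρ * (W * Wᴴ) * σ * (W * Wᴴ)) := by rw [trace_mul_comm, Matrix.mul_assoc _ W]
    _ = trace (ρ * σ) := by rw [hW, Matrix.mul_one, Matrix.mul_one]

theorem PosSemidef.apply_le_partialTraceRight_apply [Fintype β]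
    {ρ : Matrix (α × β) (α × β) 𝕜} (hρ : ρ.PosSemidef) (a : α) (b : β) :
    ρ (a, b) (a, b) ≤ partialTraceRight ρ a a :=
  Finset.single_le_sum (f := fun b => ρ (a, b) (a, b)) (fun _ _ => hρ.diag_nonneg)
    (Finset.mem_univ b)

theorem PosSemidef.apply_le_partialTraceLeft_apply [Fintype α]
    {ρ : Matrix (α × β) (α × β) 𝕜} (hρ : ρ.PosSemidef) (a : α) (b : β) :
    ρ (a, b) (a, b) ≤ partialTraceLeft ρ b b :=
  Finset.single_le_sum (f := fun a => ρ (a, b) (a, b)) (fun _ _ => hρ.diag_nonneg)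
    (Finset.mem_univ a)

theorem trace_mul_diagonal_kronecker_diagonal_pos [Fintype α] [Fintype β] [DecidableEq α]
    [DecidableEq β] {ρ : Matrix (α × β) (α × β) 𝕜} (hρ : ρ.PosSemidef) (hρ0 : ρ ≠ 0) :
    0 < trace (ρ *
      (diagonal (partialTraceRight ρ).diag ⊗ₖ diagonal (partialTraceLeft ρ).diag)) := by
  obtain ⟨x, hx⟩ : ∃ x, ρ x x ≠ 0 := by
    by_contra! h
    exact hρ0 (hρ.trace_eq_zero_iff.mp (Finset.sum_eq_zero fun x _ => h x))
  have hxpos : 0 < ρ x x := lt_of_le_of_ne hρ.diag_nonneg (Ne.symm hx)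
  rw [diagonal_kronecker_diagonal]
  simp only [trace, diag_apply, mul_diagonal]
  have hA := hρ.apply_le_partialTraceRight_apply
  have hB := hρ.apply_le_partialTraceLeft_apply
  refine Finset.sum_pos' (fun y _ => ?_) ⟨x, Finset.mem_univ x, ?_⟩
  · exact mul_nonneg hρ.diag_nonneg
      (mul_nonneg (hρ.diag_nonneg.trans (hA y.1 y.2)) (hρ.diag_nonneg.trans (hB y.1 y.2)))
  · exact mul_pos hxpos (mul_pos (hxpos.trans_le (hA x.1 x.2)) (hxpos.trans_le (hB x.1 x.2)))

theorem IsHermitian.isDiag_conjTranspose_eigenvectorUnitary_mul_mul {n : Type*}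
    [Fintype n] [DecidableEq n] {A : Matrix n n 𝕜} (hA : A.IsHermitian) :
    ((hA.eigenvectorUnitary : Matrix n n 𝕜)ᴴ * A * hA.eigenvectorUnitary).IsDiag := by
  have h := hA.conjStarAlgAut_star_eigenvectorUnitary
  rw [Unitary.conjStarAlgAut_star_apply, star_eq_conjTranspose] at h
  rw [h]
  exact isDiag_diagonal _

theorem PosSemidef.trace_mul_kronecker_partialTrace_pos [Fintype α] [Fintype β]
    {ρ : Matrix (α × β) (α × β) 𝕜} (hρ : ρ.PosSemidef) (hρ0 : ρ ≠ 0) :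
    0 < trace (ρ * (partialTraceRight ρ ⊗ₖ partialTraceLeft ρ)) := by
  classical
  set U : Matrix α α 𝕜 := (hρ.isHermitian.partialTraceRight.eigenvectorUnitary : Matrix α α 𝕜)
  set V : Matrix β β 𝕜 := (hρ.isHermitian.partialTraceLeft.eigenvectorUnitary : Matrix β β 𝕜)
  have hU : U * Uᴴ = 1 := Unitary.coe_mul_star_self _
  have hV : V * Vᴴ = 1 := Unitary.coe_mul_star_self _
  rw [← trace_mul_kronecker_partialTrace_conjTranspose_mul_mul_kronecker ρ hU hV]
  set ρ' := (U ⊗ₖ V)ᴴ * ρ * (U ⊗ₖ V)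
  have hA : (partialTraceRight ρ').IsDiag := by
    rw [partialTraceRight_conjTranspose_mul_mul_kronecker ρ U V hV]
    exact hρ.isHermitian.partialTraceRight.isDiag_conjTranspose_eigenvectorUnitary_mul_mul
  have hB : (partialTraceLeft ρ').IsDiag := by
    rw [partialTraceLeft_conjTranspose_mul_mul_kronecker ρ U V hU]
    exact hρ.isHermitian.partialTraceLeft.isDiag_conjTranspose_eigenvectorUnitary_mul_mul
  have hρ'0 : ρ' ≠ 0 := by
    have hW := kronecker_mul_conjTranspose_eq_one hU hV
    have hρ_eq : ρ = (U ⊗ₖ V) * ρ' * (U ⊗ₖ V)ᴴ := by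
      simp only [ρ', ← Matrix.mul_assoc, hW, Matrix.one_mul]
      rw [Matrix.mul_assoc, hW, Matrix.mul_one]
    exact fun h => hρ0 (by rw [hρ_eq, h, Matrix.mul_zero, Matrix.zero_mul])
  rw [← hA.diagonal_diag, ← hB.diagonal_diag]
  exact trace_mul_diagonal_kronecker_diagonal_pos (hρ.conjTranspose_mul_mul_same _) hρ'0

end Matrix

theorem state_not_orthogonal_to_product_of_marginals_general {α β : Type*} [Fintype α] [Fintype β]
    (ρ : Matrix (α × β) (α × β) ℂ) (hρ : ρ.PosSemidef) (htr : ρ.trace = 1) :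
    0 < ((ρ * ((Matrix.of fun m n => ∑ b, ρ (m, b) (n, b)) ⊗ₖ
        (Matrix.of fun b b' => ∑ m, ρ (m, b) (m, b')))).trace).re := by
  have hρ0 : ρ ≠ 0 := by
    rintro rfl
    simp at htr
  exact (Complex.pos_iff.mp (hρ.trace_mul_kronecker_partialTrace_pos hρ0)).1

/-- A bipartite state is never orthogonal to the product of its marginals: for any density
matrix `ρ` on `α × β`, the overlap `Tr(ρ · (ρ_A ⊗ ρ_B))` has strictly positive real part. -/
theorem state_not_orthogonal_to_product_of_marginals {α β : Type*} [Fintype α] [Fintype β]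
    [Nonempty α] [Nonempty β] [DecidableEq α] [DecidableEq β]
    (ρ : Matrix (α × β) (α × β) ℂ) (hρ : ρ.PosSemidef) (htr : ρ.trace = 1) :
    0 < ((ρ * ((Matrix.of fun m n => ∑ b, ρ (m, b) (n, b)) ⊗ₖ
        (Matrix.of fun b b' => ∑ m, ρ (m, b) (m, b')))).trace).re :=
  state_not_orthogonal_to_product_of_marginals_general ρ hρ htr
end
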